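/- For every positive integer e, the first-row entries of R_n^e are a_{1,j}^{(e)} = C(n-1, j-1) * F_{e-1}^{n-j} * F_e^{j-1} for 1 ≤ j ≤ n, where 0^0 is interpreted as 1. -/

import Mathlib

/-- `R n` is the `n × n` integer matrix whose 1-based `(i,j)` entry is `C(i-1, n-j)`. -/
def Rmat (n : ℕ) : Matrix (Fin n) (Fin n) ℤ :=
  Matrix.of fun i j => (Nat.choose i.1 (n - 1 - j.1) : ℤ)

/-!
The binomial identity `∑ₖ C(p,k) C(k,m) x^(p-k) y^k = C(p,m) y^m (x+y)^(p-m)` says that right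
multiplication by `R` maps the row `binomRow p x y = (C(p,k) x^(p-k) y^k)ₖ` to
`binomRow p y (x + y)`, a Fibonacci step. Since the first row of `R⁰` is `binomRow p 1 0`,
the first row of `R^(e+1)` is `binomRow p F_e F_(e+1)`.
-/

open Finset Matrix Nat

theorem sum_choose_mul_choose_mul_pow_mul_pow {R : Type*} [CommSemiring R] {p m : ℕ}
    (hm : m ≤ p) (x y : R) :
    ∑ k ∈ range (p + 1), (p.choose k * k.choose m : R) * x ^ (p - k) * y ^ k
      = p.choose m * y ^ m * (x + y) ^ (p - m) := by
  have below : ∀ k ∈ range m, (p.choose k * k.choose m : R) * x ^ (p - k) * y ^ k = 0 :=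
    fun k hk => by simp [Nat.choose_eq_zero_of_lt (mem_range.mp hk)]
  rw [show p + 1 = m + (p - m + 1) by omega, sum_range_add, sum_eq_zero below, zero_add,
    add_comm x y, add_pow, mul_sum]
  refine sum_congr rfl fun t ht => ?_
  have hmt : m + t ≤ p := by have := mem_range.mp ht; omega
  rw [← Nat.cast_mul, Nat.choose_mul (Nat.le_add_right m t), Nat.cast_mul,
    Nat.add_sub_cancel_left, pow_add, show p - (m + t) = p - m - t by omega]
  ring

def binomRow (p : ℕ) (x y : ℤ) : Fin (p + 1) → ℤ :=
  fun k => p.choose k * x ^ (p - k) * y ^ (k : ℕ)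

theorem binomRow_one_zero (p : ℕ) : binomRow p 1 0 = Pi.single 0 1 := by
  ext k
  rcases eq_or_ne k 0 with rfl | hk
  · simp [binomRow]
  · simp [binomRow, hk, Fin.val_ne_zero_iff.mpr hk]

theorem binomRow_vecMul_Rmat (p : ℕ) (x y : ℤ) :
    binomRow p x y ᵥ* Rmat (p + 1) = binomRow p y (x + y) := by
  ext j
  simp only [vecMul, dotProduct, binomRow, Rmat, of_apply, add_tsub_cancel_right]
  rw [Fin.sum_univ_eq_sum_range
    (fun k => (p.choose k : ℤ) * x ^ (p - k) * y ^ k * (k.choose (p - j) : ℤ))]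
  calc _ = ∑ k ∈ range (p + 1), (p.choose k * k.choose (p - j) : ℤ) * x ^ (p - k) * y ^ k :=
        sum_congr rfl fun _ _ => by ring
    _ = p.choose (p - j) * y ^ (p - j) * (x + y) ^ (p - (p - j)) :=
        sum_choose_mul_choose_mul_pow_mul_pow (Nat.sub_le p j) x y
    _ = _ := by rw [Nat.choose_symm j.is_le, Nat.sub_sub_self j.is_le]

theorem Rmat_pow_succ_row_zero (p e : ℕ) :
    (Rmat (p + 1) ^ (e + 1)) 0 = binomRow p (fib e) (fib (e + 1)) := by
  have row_pow_succ : ∀ k, (Rmat (p + 1) ^ (k + 1)) 0 = (Rmat (p + 1) ^ k) 0 ᵥ* Rmat (p + 1) :=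
    fun k => by rw [pow_succ, mul_apply_eq_vecMul]
  induction e with
  | zero =>
    have one_row_zero : (1 : Matrix (Fin (p + 1)) (Fin (p + 1)) ℤ) 0 = binomRow p 1 0 := by
      ext j; rw [one_eq_pi_single, binomRow_one_zero]
    rw [row_pow_succ, pow_zero, one_row_zero, binomRow_vecMul_Rmat]
    simp
  | succ e ih =>
    rw [row_pow_succ, ih, binomRow_vecMul_Rmat, fib_add_two, Nat.cast_add]

theorem Rmat_pow_first_row (n : ℕ) (hn : 1 ≤ n) (e : ℕ) (he : 0 < e) (j : ℕ)
    (hj1 : 1 ≤ j) (hjn : j ≤ n) :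
    (Rmat n ^ e) ⟨0, by omega⟩ ⟨j - 1, by omega⟩ =
      (Nat.choose (n - 1) (j - 1) : ℤ) * (Nat.fib (e - 1) : ℤ) ^ (n - j)
        * (Nat.fib e : ℤ) ^ (j - 1) := by
  obtain ⟨p, rfl⟩ := Nat.exists_eq_add_of_le' hn
  obtain ⟨e, rfl⟩ := Nat.exists_eq_add_of_le' he
  obtain ⟨k, rfl⟩ := Nat.exists_eq_add_of_le' hj1
  have entry := congrFun (Rmat_pow_succ_row_zero p e) ⟨k, by omega⟩
  simpa [binomRow, show p + 1 - (k + 1) = p - k by omega] using entry
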